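/- arXiv:1512.07494 — 4 statements merged into one kernel-verified Lean document; each statement's English description precedes it below -/
import Mathlib

section
/- The elementary operations of an independent edit path between two graphs G1 and G2 can be reordered into a valid independent edit path consisting of a sequence of removals, followed by a sequence of substitutions, followed by a sequence of insertions, transforming G1 into G2 with the same multiset of operations (hence the same cost). -/
/-- Elementary edit operations on labeled graphs. -/
inductive EditOp (L : Type) where
  | rmV (v : ℕ)
  | rmE (e : ℕ × ℕ)
  | insV (v : ℕ) (l : L)
  | insE (e : ℕ × ℕ) (l : L)
  | subV (v : ℕ) (l : L)
  | subE (e : ℕ × ℕ) (l : L)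

/-- A labeled graph (not assumed simple a priori). -/
structure LGraph (L : Type) where
  V : Finset ℕ
  E : Finset (ℕ × ℕ)
  μ : ℕ → L
  ν : ℕ × ℕ → L

/-- A graph is simple: edges join existing vertices, at most one edge per
ordered pair (automatic from `Finset`), and no self-loops. -/
def LGraph.IsSimple {L : Type} (G : LGraph L) : Prop :=
  (∀ e ∈ G.E, e.1 ∈ G.V ∧ e.2 ∈ G.V) ∧ (∀ e ∈ G.E, e.1 ≠ e.2)

/-- The effect of an elementary edit operation on a graph. -/
def LGraph.apply {L : Type} (G : LGraph L) : EditOp L → LGraph L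
  | .rmV v => { G with V := G.V.erase v }
  | .rmE e => { G with E := G.E.erase e }
  | .insV v l => { G with V := insert v G.V, μ := Function.update G.μ v l }
  | .insE e l => { G with E := insert e G.E, ν := Function.update G.ν e l }
  | .subV v l => { G with μ := Function.update G.μ v l }
  | .subE e l => { G with ν := Function.update G.ν e l }

/-- Edit-path legality constraints for an elementary operation: a node may be
removed only after all its incident edges have been removed; an edge may be
inserted only between two existing nodes, without creating a parallel edge or
a self-loop; removals and substitutions apply to existing elements; node
insertion requires a fresh node. -/
def LGraph.Legal {L : Type} (G : LGraph L) : EditOp L → Prop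
  | .rmV v => v ∈ G.V ∧ ∀ e ∈ G.E, e.1 ≠ v ∧ e.2 ≠ v
  | .rmE e => e ∈ G.E
  | .insV v _ => v ∉ G.V
  | .insE e _ => e.1 ∈ G.V ∧ e.2 ∈ G.V ∧ e ∉ G.E ∧ e.1 ≠ e.2
  | .subV v _ => v ∈ G.V
  | .subE e _ => e ∈ G.E

/-- `IsEditPath G P G'` : the sequence of elementary operations `P` is an edit
path of `G` (each operation is legal when performed) transforming `G` into `G'`. -/
inductive IsEditPath {L : Type} : LGraph L → List (EditOp L) → LGraph L → Prop
  | nil (G : LGraph L) : IsEditPath G [] G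
  | cons {G G'' : LGraph L} {op : EditOp L} {P : List (EditOp L)} :
      G.Legal op → IsEditPath (G.apply op) P G'' → IsEditPath G (op :: P) G''

/-- Classification of elementary operations. -/
def EditOp.isRemoval {L : Type} : EditOp L → Prop
  | .rmV _ => True | .rmE _ => True | _ => False

def EditOp.isSubstitution {L : Type} : EditOp L → Prop
  | .subV _ _ => True | .subE _ _ => True | _ => False

def EditOp.isInsertion {L : Type} : EditOp L → Prop
  | .insV _ _ => True | .insE _ _ => True | _ => False

/-- An independent edit path: no node or edge is both substituted and removed,
none is both substituted and inserted, no inserted element is later removed,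
and every node or edge is substituted at most once. -/
def Indep {L : Type} (P : List (EditOp L)) : Prop :=
  (∀ v l, EditOp.subV v l ∈ P → EditOp.rmV (L := L) v ∉ P) ∧
  (∀ e l, EditOp.subE e l ∈ P → EditOp.rmE (L := L) e ∉ P) ∧
  (∀ v l l', EditOp.subV v l ∈ P → EditOp.insV v l' ∉ P) ∧
  (∀ e l l', EditOp.subE e l ∈ P → EditOp.insE e l' ∉ P) ∧
  (∀ v l, ¬ List.Sublist [EditOp.insV v l, EditOp.rmV v] P) ∧
  (∀ e l, ¬ List.Sublist [EditOp.insE e l, EditOp.rmE e] P) ∧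
  (∀ v, P.countP (fun op => match op with | .subV w _ => decide (w = v) | _ => false) ≤ 1) ∧
  (∀ e, P.countP (fun op => match op with | .subE f _ => decide (f = e) | _ => false) ≤ 1)

/-!
Sort the path stably by kind: removals, then substitutions, then insertions. Whenever an
operation `a` is immediately followed by an operation `b` of an earlier kind, the two can be
swapped: independence guarantees that they touch different elements, so their effects commute,
and legality survives because an insertion only enables operations on the inserted element
while a removal or substitution only affects its own element. The independence conditions are
statements about the multiset of operations, except "no inserted element is later removed",
which holds in the sorted path because every insertion comes after every removal.
-/

namespace EditOp

variable {L : Type}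

def rank : EditOp L → ℕ
  | .rmV _ | .rmE _ => 0
  | .subV _ _ | .subE _ _ => 1
  | .insV _ _ | .insE _ _ => 2

theorem rank_eq (a : EditOp L) : a.rank = 0 ∨ a.rank = 1 ∨ a.rank = 2 := by
  cases a <;> simp [rank]

def Compatible : EditOp L → EditOp L → Prop
  | .insV v _, .rmV w | .insV v _, .subV w _ | .subV v _, .rmV w => v ≠ w
  | .insE e _, .rmE f | .insE e _, .subE f _ | .subE e _, .rmE f => e ≠ f
  | _, _ => True

def sortByRank (P : List (EditOp L)) : List (EditOp L) :=
  P.filter (·.rank = 0) ++ P.filter (·.rank = 1) ++ P.filter (·.rank = 2)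

theorem sortByRank_perm (P : List (EditOp L)) : (sortByRank P).Perm P := by
  induction P with
  | nil => rfl
  | cons a P ih =>
    unfold sortByRank at ih ⊢
    rw [List.append_assoc] at ih
    rcases a.rank_eq with h | h | h <;> simp [h]
    · exact ih
    · exact List.perm_middle.trans (ih.cons a)
    · rw [← List.append_assoc] at ih ⊢
      exact List.perm_middle.trans (ih.cons a)

theorem sortByRank_pairwise (P : List (EditOp L)) :
    (sortByRank P).Pairwise (·.rank ≤ ·.rank) := by
  simp +contextual [sortByRank, List.pairwise_append, List.pairwise_filter, List.mem_filter]
  exact List.pairwise_of_forall fun _ _ => trivial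

end EditOp

namespace LGraph

variable {L : Type} {a b : EditOp L}

theorem apply_apply_comm (G : LGraph L) (hr : b.rank < a.rank) (hc : a.Compatible b) :
    (G.apply a).apply b = (G.apply b).apply a := by
  cases a <;> cases b <;>
    simp_all [EditOp.rank, EditOp.Compatible, LGraph.apply, Finset.erase_insert_of_ne] <;>
    exact Function.update_comm hc _ _ _

theorem legal_swap {G : LGraph L} (hr : b.rank < a.rank) (hc : a.Compatible b)
    (ha : G.Legal a) (hb : (G.apply a).Legal b) : G.Legal b ∧ (G.apply b).Legal a := by
  cases a <;> cases b <;>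
    simp_all [EditOp.rank, EditOp.Compatible, LGraph.apply, LGraph.Legal] <;> grind

end LGraph

namespace IsEditPath

variable {L : Type} {G G' : LGraph L} {a b : EditOp L} {P Q T : List (EditOp L)}

theorem swap (hr : b.rank < a.rank) (hc : a.Compatible b)
    (h : IsEditPath G (a :: b :: P) G') : IsEditPath G (b :: a :: P) G' := by
  obtain _ | ⟨ha, _ | ⟨hb, hP⟩⟩ := h
  obtain ⟨hb', ha'⟩ := LGraph.legal_swap hr hc ha hb
  rw [G.apply_apply_comm hr hc] at hP
  exact .cons hb' (.cons ha' hP)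

theorem move_past (h : IsEditPath G (a :: (Q ++ T)) G')
    (hQ : ∀ b ∈ Q, b.rank < a.rank ∧ a.Compatible b) : IsEditPath G (Q ++ a :: T) G' := by
  induction Q generalizing G with
  | nil => exact h
  | cons b Q ih =>
    obtain ⟨hr, hc⟩ := hQ b List.mem_cons_self
    obtain _ | ⟨hb, hP⟩ := h.swap hr hc
    exact .cons hb (ih hP fun c hc => hQ c (List.mem_cons_of_mem b hc))

end IsEditPath

theorem Indep.pairwise_compatible {L : Type} {P : List (EditOp L)} (h : Indep P) :
    P.Pairwise EditOp.Compatible := by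
  rw [List.pairwise_iff_forall_sublist]
  intro a b hab
  obtain ⟨h1, h2, h3, h4, h5, h6, -, -⟩ := h
  have ha : a ∈ P := hab.subset (by simp)
  have hb : b ∈ P := hab.subset (by simp)
  cases a <;> cases b <;> simp only [EditOp.Compatible] <;> try trivial
  all_goals rintro rfl
  case insV.rmV v l => exact h5 v l hab
  case insE.rmE e l => exact h6 e l hab
  case insV.subV v l l' => exact h3 v l' l hb ha
  case insE.subE e l l' => exact h4 e l' l hb ha
  case subV.rmV v l => exact h1 v l ha hb
  case subE.rmE e l => exact h2 e l ha hb

theorem IsEditPath.sortByRank {L : Type} {G G' : LGraph L} {P : List (EditOp L)}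
    (h : IsEditPath G P G') (hP : P.Pairwise EditOp.Compatible) :
    IsEditPath G (EditOp.sortByRank P) G' := by
  induction h with
  | nil => exact .nil _
  | @cons G _ a P ha _ ih =>
    obtain ⟨haP, hP⟩ := List.pairwise_cons.1 hP
    have h := IsEditPath.cons ha (ih hP)
    have hlower : ∀ b ∈ P, b.rank < a.rank → b.rank < a.rank ∧ a.Compatible b :=
      fun b hb hr => ⟨hr, haP b hb⟩
    unfold EditOp.sortByRank at h ⊢
    rcases a.rank_eq with hr | hr | hr <;> simp [hr]
    · simpa using h
    · rw [List.append_assoc] at h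
      refine h.move_past fun b hb => ?_
      simp only [List.mem_filter, decide_eq_true_eq] at hb
      exact hlower b hb.1 (by omega)
    · rw [← List.append_assoc]
      refine h.move_past fun b hb => ?_
      simp only [List.mem_append, List.mem_filter, decide_eq_true_eq] at hb
      exact hlower b (by tauto) (by omega)

theorem Indep.of_perm_of_pairwise_rank {L : Type} {P Q : List (EditOp L)} (h : Indep P)
    (hQP : Q.Perm P) (hQ : Q.Pairwise (·.rank ≤ ·.rank)) : Indep Q := by
  obtain ⟨h1, h2, h3, h4, -, -, h7, h8⟩ := h
  have hrank {x y : EditOp L} (hs : [x, y].Sublist Q) : x.rank ≤ y.rank := by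
    simpa using hQ.sublist hs
  simp only [Indep, hQP.mem_iff, hQP.countP_eq]
  exact ⟨h1, h2, h3, h4, fun _ _ hs => absurd (hrank hs) (by simp [EditOp.rank]),
    fun _ _ hs => absurd (hrank hs) (by simp [EditOp.rank]), h7, h8⟩

/-- the operations of an independent edit path from `G1` to `G2`
can be reordered into removals, then substitutions, then insertions, giving a
valid independent edit path from `G1` to `G2` with the same multiset of
operations (hence the same cost). -/
theorem indep_editPath_reorder {L : Type} (G1 G2 : LGraph L) (P : List (EditOp L))
    (hP : IsEditPath G1 P G2) (hInd : Indep P) :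
    ∃ R S I : List (EditOp L),
      (∀ op ∈ R, op.isRemoval) ∧ (∀ op ∈ S, op.isSubstitution) ∧ (∀ op ∈ I, op.isInsertion) ∧
      (R ++ S ++ I).Perm P ∧ IsEditPath G1 (R ++ S ++ I) G2 ∧ Indep (R ++ S ++ I) := by
  have hperm := EditOp.sortByRank_perm P
  refine ⟨P.filter (·.rank = 0), P.filter (·.rank = 1), P.filter (·.rank = 2), ?_, ?_, ?_, hperm,
    hP.sortByRank hInd.pairwise_compatible,
    hInd.of_perm_of_pairwise_rank hperm (EditOp.sortByRank_pairwise P)⟩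
  all_goals
    intro op hop
    have hr := of_decide_eq_true (List.mem_filter.1 hop).2
    cases op <;> simp_all [EditOp.rank, EditOp.isRemoval, EditOp.isSubstitution, EditOp.isInsertion]
end

section
/- Let P be an independent edit path from G1 to G2, reordered as removals R, substitutions S, insertions I. Then the graph \u011c1 obtained from G1 by applying R is a subgraph of G1; the graph \u011c2 obtained from G1 by applying (R,S) is a subgraph of G2; and \u011c1 and \u011c2 have the same underlying unlabeled structure (they are structurally isomorphic). -/
/-- `Subgraph H G` : `H` is a (labeled) subgraph of `G`. -/
def Subgraph {L : Type} (H G : LGraph L) : Prop :=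
  H.V ⊆ G.V ∧ H.E ⊆ G.E ∧ (∀ e ∈ H.E, e.1 ∈ H.V ∧ e.2 ∈ H.V) ∧
  (∀ v ∈ H.V, H.μ v = G.μ v) ∧ (∀ e ∈ H.E, H.ν e = G.ν e)


/-!
Removals only delete vertices and edges, and a vertex can be removed only once its incident
edges are gone, so every removal step passes to a subgraph. Substitutions change labels only.
Insertions add fresh vertices and edges without relabelling existing ones, so a subgraph of the
graph before an insertion is still a subgraph after it.
-/

def LGraph.EdgesOnVertices {L : Type} (G : LGraph L) : Prop :=
  ∀ e ∈ G.E, e.1 ∈ G.V ∧ e.2 ∈ G.V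

section

variable {L : Type}

theorem Subgraph.refl {G : LGraph L} (hG : G.EdgesOnVertices) : Subgraph G G :=
  ⟨subset_rfl, subset_rfl, hG, fun _ _ => rfl, fun _ _ => rfl⟩

theorem Subgraph.trans {A B C : LGraph L} (hAB : Subgraph A B) (hBC : Subgraph B C) :
    Subgraph A C :=
  ⟨hAB.1.trans hBC.1, hAB.2.1.trans hBC.2.1, hAB.2.2.1,
    fun v hv => (hAB.2.2.2.1 v hv).trans (hBC.2.2.2.1 v (hAB.1 hv)),
    fun e he => (hAB.2.2.2.2 e he).trans (hBC.2.2.2.2 e (hAB.2.1 he))⟩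

theorem Subgraph.edgesOnVertices {H G : LGraph L} (h : Subgraph H G) : H.EdgesOnVertices :=
  h.2.2.1

theorem LGraph.subgraph_apply_self_of_isRemoval {G : LGraph L} {op : EditOp L}
    (hG : G.EdgesOnVertices) (hop : op.isRemoval) (hlegal : G.Legal op) :
    Subgraph (G.apply op) G := by
  cases op with
  | rmV v =>
    refine ⟨Finset.erase_subset _ _, subset_rfl, fun e he => ?_, fun _ _ => rfl, fun _ _ => rfl⟩
    obtain ⟨h1, h2⟩ := hG e he
    obtain ⟨hne1, hne2⟩ := hlegal.2 e he
    exact ⟨Finset.mem_erase.2 ⟨hne1, h1⟩, Finset.mem_erase.2 ⟨hne2, h2⟩⟩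
  | rmE e =>
    exact ⟨subset_rfl, Finset.erase_subset _ _, fun f hf => hG f (Finset.mem_of_mem_erase hf),
      fun _ _ => rfl, fun _ _ => rfl⟩
  | _ => exact (hop : False).elim

theorem Subgraph.apply_of_isInsertion {H G : LGraph L} {op : EditOp L} (hHG : Subgraph H G)
    (hop : op.isInsertion) (hlegal : G.Legal op) : Subgraph H (G.apply op) := by
  obtain ⟨hV, hE, hH, hμ, hν⟩ := hHG
  cases op with
  | insV v l =>
    refine ⟨hV.trans (Finset.subset_insert _ _), hE, hH, fun w hw => ?_, hν⟩
    have hne : w ≠ v := fun h => hlegal (h ▸ hV hw)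
    simp only [LGraph.apply, Function.update_of_ne hne]
    exact hμ w hw
  | insE e l =>
    refine ⟨hV, hE.trans (Finset.subset_insert _ _), hH, hμ, fun f hf => ?_⟩
    have hne : f ≠ e := fun h => hlegal.2.2.1 (h ▸ hE hf)
    simp only [LGraph.apply, Function.update_of_ne hne]
    exact hν f hf
  | _ => exact (hop : False).elim

namespace IsEditPath

variable {G G' : LGraph L} {P : List (EditOp L)}

theorem subgraph_of_isRemoval (h : IsEditPath G P G') (hP : ∀ op ∈ P, op.isRemoval)
    (hG : G.EdgesOnVertices) : Subgraph G' G := by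
  induction h with
  | nil => exact Subgraph.refl hG
  | cons hlegal _ ih =>
    have hstep := LGraph.subgraph_apply_self_of_isRemoval hG (hP _ List.mem_cons_self) hlegal
    exact (ih (fun op hop => hP op (List.mem_cons_of_mem _ hop)) hstep.edgesOnVertices).trans hstep

theorem V_eq_and_E_eq_of_isSubstitution (h : IsEditPath G P G')
    (hP : ∀ op ∈ P, op.isSubstitution) : G'.V = G.V ∧ G'.E = G.E := by
  induction h with
  | nil => exact ⟨rfl, rfl⟩
  | @cons _ _ op _ _ _ ih =>
    have hop := hP op List.mem_cons_self
    obtain ⟨hV, hE⟩ := ih fun op hop => hP op (List.mem_cons_of_mem _ hop)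
    cases op with
    | subV v l => exact ⟨hV, hE⟩
    | subE e l => exact ⟨hV, hE⟩
    | _ => exact (hop : False).elim

theorem subgraph_of_isInsertion {H : LGraph L} (h : IsEditPath G P G')
    (hP : ∀ op ∈ P, op.isInsertion) (hHG : Subgraph H G) : Subgraph H G' := by
  induction h with
  | nil => exact hHG
  | cons hlegal _ ih =>
    exact ih (fun op hop => hP op (List.mem_cons_of_mem _ hop))
      (hHG.apply_of_isInsertion (hP _ List.mem_cons_self) hlegal)

end IsEditPath

end

theorem indep_editPath_subgraphs_general {L : Type} (G1 G2 H1 H2 : LGraph L)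
    (R S I : List (EditOp L)) (hG1 : G1.IsSimple)
    (hR : ∀ op ∈ R, op.isRemoval) (hS : ∀ op ∈ S, op.isSubstitution)
    (hI : ∀ op ∈ I, op.isInsertion)
    (h1 : IsEditPath G1 R H1) (h2 : IsEditPath H1 S H2) (h3 : IsEditPath H2 I G2) :
    Subgraph H1 G1 ∧ Subgraph H2 G2 ∧ H1.V = H2.V ∧ H1.E = H2.E := by
  have hH1 : Subgraph H1 G1 := h1.subgraph_of_isRemoval hR hG1.1
  obtain ⟨hV, hE⟩ := h2.V_eq_and_E_eq_of_isSubstitution hS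
  have hH2 : H2.EdgesOnVertices := by
    rw [LGraph.EdgesOnVertices, hV, hE]
    exact hH1.edgesOnVertices
  exact ⟨hH1, h3.subgraph_of_isInsertion hI (Subgraph.refl hH2), hV.symm, hE.symm⟩

/-- for an independent edit path from `G1` to `G2` reordered as
removals `R`, substitutions `S`, insertions `I`: the graph `H1` obtained from
`G1` by `R` is a subgraph of `G1`; the graph `H2` obtained from `G1` by `(R,S)`
is a subgraph of `G2`; and `H1`, `H2` have the same underlying unlabeled
structure (they are structurally isomorphic). -/
theorem indep_editPath_subgraphs {L : Type} (G1 G2 H1 H2 : LGraph L)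
    (R S I : List (EditOp L)) (hG1 : G1.IsSimple)
    (hR : ∀ op ∈ R, op.isRemoval) (hS : ∀ op ∈ S, op.isSubstitution)
    (hI : ∀ op ∈ I, op.isInsertion)
    (hInd : Indep (R ++ S ++ I))
    (h1 : IsEditPath G1 R H1) (h2 : IsEditPath H1 S H2) (h3 : IsEditPath H2 I G2) :
    Subgraph H1 G1 ∧ Subgraph H2 G2 ∧ H1.V = H2.V ∧ H1.E = H2.E :=
  indep_editPath_subgraphs_general G1 G2 H1 H2 R S I hG1 hR hS hI h1 h2 h3
end

section
/- Let \u03c6: \u0124\u2081 \u2192 V2 be the injective partial function associated with a restricted edit path P between simple graphs G1 and G2, with V\u0302\u2082=\u03c6(\u0124\u2081). Define R12 = {(i,j)\u2208E1\u2229(\u0124\u2081\u00d7\u0124\u2081) : (\u03c6(i),\u03c6(j))\u2209E2} and I21 = {(k,l)\u2208E2\u2229(V\u0302\u2082\u00d7V\u0302\u2082) : (\u03c6\u207b\u00b9(k),\u03c6\u207b\u00b9(l))\u2209E1}. Then the substituted edges are exactly \u00ca1 = (E1\u2229(\u0124\u2081\u00d7\u0124\u2081))\\R12, with \u03c6(\u00ca1)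 = (E2\u2229(V\u0302\u2082\u00d7V\u0302\u2082))\\I21, the removed edges are E1\\\u00ca1, and the inserted edges are E2\\\u03c6(\u00ca1). -/
/-- A labeled graph. -/
structure LabeledGraph (L : Type) where
  V : Finset ℕ
  E : Finset (ℕ × ℕ)
  μ : ℕ → L
  ν : ℕ × ℕ → L

/-- A graph is simple: edges join existing vertices and there are no self-loops. -/
def LabeledGraph.IsSimple {L : Type} (G : LabeledGraph L) : Prop :=
  (∀ e ∈ G.E, e.1 ∈ G.V ∧ e.2 ∈ G.V) ∧ (∀ e ∈ G.E, e.1 ≠ e.2)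

/-- A restricted edit path from `G1` to `G2`, presented by its canonical
normal form: the sets of node substitutions (pairs `(i,k)` with `i ∈ V1`
substituted to `k ∈ V2`), node removals, node insertions, and the induced
edge substitutions, removals and insertions.  The coherence conditions state
that node substitutions form an injective partial mapping, that every
non-substituted node of `G1` is removed and every non-substituted node of `G2`
is inserted (no element is removed and then inserted), and that an edge is
substituted exactly when both its endpoints are substituted to the endpoints
of an edge of `G2`, all remaining edges being removed or inserted. -/
structure RestrictedEditPath {L : Type} (G1 G2 : LabeledGraph L) where
  nsub : Finset (ℕ × ℕ)
  nrem : Finset ℕ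
  nins : Finset ℕ
  esub : Finset ((ℕ × ℕ) × (ℕ × ℕ))
  erem : Finset (ℕ × ℕ)
  eins : Finset (ℕ × ℕ)
  nsub_mem : ∀ p ∈ nsub, p.1 ∈ G1.V ∧ p.2 ∈ G2.V
  nsub_fun : ∀ p ∈ nsub, ∀ q ∈ nsub, p.1 = q.1 → p.2 = q.2
  nsub_inj : ∀ p ∈ nsub, ∀ q ∈ nsub, p.2 = q.2 → p.1 = q.1
  nrem_eq : nrem = G1.V \ nsub.image Prod.fst
  nins_eq : nins = G2.V \ nsub.image Prod.snd
  esub_mem : ∀ q ∈ esub, q.1 ∈ G1.E ∧ q.2 ∈ G2.E ∧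
      (q.1.1, q.2.1) ∈ nsub ∧ (q.1.2, q.2.2) ∈ nsub
  esub_total : ∀ e ∈ G1.E, ∀ k l : ℕ,
      (e.1, k) ∈ nsub → (e.2, l) ∈ nsub → (k, l) ∈ G2.E → (e, (k, l)) ∈ esub
  erem_eq : erem = G1.E \ esub.image Prod.fst
  eins_eq : eins = G2.E \ esub.image Prod.snd

/-! Once the node substitutions are the graph of `φ` on `H1`, the coherence conditions
`esub_mem` and `esub_total` pin the edge substitutions down to the pairs `((i, j), (φ i, φ j))`
with `(i, j) ∈ E1`, `i, j ∈ H1` and `(φ i, φ j) ∈ E2`. The first two identities are the two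
projections of this description; the last two are the defining equations of `erem` and `eins`. -/

namespace RestrictedEditPath

variable {L : Type} {G1 G2 : LabeledGraph L} (P : RestrictedEditPath G1 G2)
  {H1 : Finset ℕ} {φ : ℕ → ℕ}

theorem mem_nsub_iff (hφ : P.nsub = H1.image (fun i => (i, φ i))) (i k : ℕ) :
    (i, k) ∈ P.nsub ↔ i ∈ H1 ∧ k = φ i := by
  simp [hφ, eq_comm]

theorem mem_esub_iff (hφ : P.nsub = H1.image (fun i => (i, φ i))) (i j k l : ℕ) :
    ((i, j), (k, l)) ∈ P.esub ↔
      (i, j) ∈ G1.E ∧ (k, l) ∈ G2.E ∧ (i ∈ H1 ∧ k = φ i) ∧ (j ∈ H1 ∧ l = φ j) := by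
  rw [← P.mem_nsub_iff hφ, ← P.mem_nsub_iff hφ]
  exact ⟨P.esub_mem _, fun ⟨hij, hkl, hik, hjl⟩ => P.esub_total _ hij k l hik hjl hkl⟩

theorem mem_esub_image_fst_iff (hφ : P.nsub = H1.image (fun i => (i, φ i))) (i j : ℕ) :
    (i, j) ∈ P.esub.image Prod.fst ↔
      (i, j) ∈ G1.E ∧ i ∈ H1 ∧ j ∈ H1 ∧ (φ i, φ j) ∈ G2.E := by
  simp only [Finset.mem_image, Prod.exists, P.mem_esub_iff hφ]
  constructor
  · rintro ⟨_, _, k, l, ⟨hij, hkl, ⟨hi, rfl⟩, ⟨hj, rfl⟩⟩, ⟨⟩⟩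
    exact ⟨hij, hi, hj, hkl⟩
  · rintro ⟨hij, hi, hj, hφij⟩
    exact ⟨i, j, φ i, φ j, ⟨hij, hφij, ⟨hi, rfl⟩, ⟨hj, rfl⟩⟩, rfl⟩

theorem mem_esub_image_snd_iff (hφ : P.nsub = H1.image (fun i => (i, φ i))) (k l : ℕ) :
    (k, l) ∈ P.esub.image Prod.snd ↔
      (k, l) ∈ G2.E ∧ ∃ i ∈ H1, ∃ j ∈ H1, φ i = k ∧ φ j = l ∧ (i, j) ∈ G1.E := by
  simp only [Finset.mem_image, Prod.exists, P.mem_esub_iff hφ]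
  constructor
  · rintro ⟨i, j, _, _, ⟨hij, hkl, ⟨hi, rfl⟩, ⟨hj, rfl⟩⟩, ⟨⟩⟩
    exact ⟨hkl, i, hi, j, hj, rfl, rfl, hij⟩
  · rintro ⟨hkl, i, hi, j, hj, rfl, rfl, hij⟩
    exact ⟨i, j, φ i, φ j, ⟨hij, hkl, ⟨hi, rfl⟩, ⟨hj, rfl⟩⟩, rfl⟩

end RestrictedEditPath

open scoped Classical in
theorem restrictedEditPath_edge_sets_general {L : Type} (G1 G2 : LabeledGraph L)
    (P : RestrictedEditPath G1 G2) (H1 : Finset ℕ) (φ : ℕ → ℕ)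
    (hφ : P.nsub = H1.image (fun i => (i, φ i))) :
    letI V2h : Finset ℕ := H1.image φ
    letI R12 : Finset (ℕ × ℕ) :=
      (G1.E ∩ H1 ×ˢ H1).filter (fun e => (φ e.1, φ e.2) ∉ G2.E)
    letI I21 : Finset (ℕ × ℕ) :=
      (G2.E ∩ V2h ×ˢ V2h).filter
        (fun f => ∀ i ∈ H1, ∀ j ∈ H1, φ i = f.1 → φ j = f.2 → (i, j) ∉ G1.E)
    P.esub.image Prod.fst = (G1.E ∩ H1 ×ˢ H1) \ R12
    ∧ P.esub.image Prod.snd = (G2.E ∩ V2h ×ˢ V2h) \ I21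
    ∧ P.erem = G1.E \ P.esub.image Prod.fst
    ∧ P.eins = G2.E \ P.esub.image Prod.snd := by
  refine ⟨?_, ?_, P.erem_eq, P.eins_eq⟩
  · ext ⟨i, j⟩
    rw [P.mem_esub_image_fst_iff hφ]
    simp only [Finset.mem_sdiff, Finset.mem_filter, Finset.mem_inter, Finset.mem_product]
    tauto
  · ext ⟨k, l⟩
    rw [P.mem_esub_image_snd_iff hφ]
    simp only [Finset.mem_sdiff, Finset.mem_filter, Finset.mem_inter, Finset.mem_product,
      Finset.mem_image]
    constructor
    · rintro ⟨hkl, i, hi, j, hj, hik, hjl, hij⟩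
      exact ⟨⟨hkl, ⟨i, hi, hik⟩, ⟨j, hj, hjl⟩⟩, fun h => h.2 i hi j hj hik hjl hij⟩
    · rintro ⟨⟨hkl, hk, hl⟩, hnot⟩
      simp only [not_and, not_forall, not_not] at hnot
      obtain ⟨i, hi, j, hj, hik, hjl, hij⟩ := hnot ⟨hkl, hk, hl⟩
      exact ⟨hkl, i, hi, j, hj, hik, hjl, hij⟩

open scoped Classical in
/-- let `φ : Ĥ1 → V2` be the injective partial function associated
with a restricted edit path `P` between simple graphs `G1`, `G2`, with
`V̂2 = φ(Ĥ1)`, and let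
`R12 = {(i,j) ∈ E1∩(Ĥ1×Ĥ1) : (φ i, φ j) ∉ E2}` and
`I21 = {(k,l) ∈ E2∩(V̂2×V̂2) : (φ⁻¹ k, φ⁻¹ l) ∉ E1}`.
Then the substituted edges are exactly `Ê1 = (E1∩(Ĥ1×Ĥ1)) \ R12`, their images
form `φ(Ê1) = (E2∩(V̂2×V̂2)) \ I21`, the removed edges are `E1 \ Ê1` and the
inserted edges are `E2 \ φ(Ê1)`. -/
theorem restrictedEditPath_edge_sets {L : Type} (G1 G2 : LabeledGraph L)
    (h1 : G1.IsSimple) (h2 : G2.IsSimple)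
    (P : RestrictedEditPath G1 G2) (H1 : Finset ℕ) (φ : ℕ → ℕ)
    (hφ : P.nsub = H1.image (fun i => (i, φ i)))
    (hinj : Set.InjOn φ ↑H1) :
    letI V2h : Finset ℕ := H1.image φ
    letI R12 : Finset (ℕ × ℕ) :=
      (G1.E ∩ H1 ×ˢ H1).filter (fun e => (φ e.1, φ e.2) ∉ G2.E)
    letI I21 : Finset (ℕ × ℕ) :=
      (G2.E ∩ V2h ×ˢ V2h).filter
        (fun f => ∀ i ∈ H1, ∀ j ∈ H1, φ i = f.1 → φ j = f.2 → (i, j) ∉ G1.E)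
    P.esub.image Prod.fst = (G1.E ∩ H1 ×ˢ H1) \ R12
    ∧ P.esub.image Prod.snd = (G2.E ∩ V2h ×ˢ V2h) \ I21
    ∧ P.erem = G1.E \ P.esub.image Prod.fst
    ∧ P.eins = G2.E \ P.esub.image Prod.snd :=
  restrictedEditPath_edge_sets_general G1 G2 P H1 φ hφ
end

section
/- There is a bijection between the set of \u03b5-assignment matrices up to the equivalence relation (ignoring the auxiliary block X^\u03b5) and the set of injective partial functions from X={1,…,n} to Y={1,…,m}. -/
/-- An `ε`-assignment matrix: an `(n+m) × (m+n)` permutation matrix (0/1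
entries, all row and column sums equal to 1) whose removal block (rows `< n`,
columns `≥ m`) and insertion block (rows `≥ n`, columns `< m`) have zero
off-diagonal entries: row `i < n` may only use dummy column `ε_i` (column
`m + i`) and dummy row `ε_j` (row `n + j`) may only use column `j`. -/
def EpsAssignMatrix (n m : ℕ) : Type :=
  {X : Matrix (Fin (n + m)) (Fin (m + n)) ℕ //
    (∀ i j, X i j = 0 ∨ X i j = 1) ∧
    (∀ i, ∑ j, X i j = 1) ∧
    (∀ j, ∑ i, X i j = 1) ∧
    (∀ (i : Fin (n + m)) (j : Fin (m + n)),
      (i : ℕ) < n → m ≤ (j : ℕ) → X i j = 1 → (j : ℕ) = m + (i : ℕ)) ∧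
    (∀ (i : Fin (n + m)) (j : Fin (m + n)),
      n ≤ (i : ℕ) → (j : ℕ) < m → X i j = 1 → (i : ℕ) = n + (j : ℕ))}

/-- Two `ε`-assignment matrices are equivalent iff they coincide outside of the
auxiliary block `X^ε` (rows `≥ n` and columns `≥ m`), i.e. their substitution,
removal and insertion blocks coincide. -/
def epsAssignSetoid (n m : ℕ) : Setoid (EpsAssignMatrix n m) where
  r X Y := ∀ (i : Fin (n + m)) (j : Fin (m + n)),
    ((i : ℕ) < n ∨ (j : ℕ) < m) → X.val i j = Y.val i j
  iseqv := ⟨fun _ _ _ _ => rfl,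
    fun h i j hij => (h i j hij).symm,
    fun h1 h2 i j hij => (h1 i j hij).trans (h2 i j hij)⟩

/-- Injective partial functions from `{1,…,n}` to `{1,…,m}`, presented by
their graphs: functional and injective sets of pairs. -/
def PartialInjFin (n m : ℕ) : Type :=
  {p : Finset (Fin n × Fin m) //
    (∀ a ∈ p, ∀ b ∈ p, a.1 = b.1 → a.2 = b.2) ∧
    (∀ a ∈ p, ∀ b ∈ p, a.2 = b.2 → a.1 = b.1)}

/-!
Reading off the substitution block `X^sub` of an `ε`-assignment matrix gives the graph of an
injective partial function, since `X` has at most one `1` per row and column. Conversely, the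
graph `p` determines the removal and insertion blocks: row `i < n` is matched to its dummy column
`ε_i` exactly when `i` is not in the domain of `p`, and dummy row `ε_j` to column `j` exactly when
`j` is not in the range. Completing with `X^ε := (X^sub)ᵀ` gives a permutation matrix, and the
row and column sums of `X` show that its removal and insertion blocks are the ones determined
by `X^sub`, so only `X^ε` is lost.
-/

open Finset Matrix

theorem Fintype.sum_boole_add_boole_forall_not_eq_one {α : Type*} [Fintype α] (P : α → Prop)
    [DecidablePred P] (hP : ∀ a b, P a → P b → a = b) :
    (∑ a, if P a then 1 else 0 : ℕ) + (if ∀ a, ¬ P a then 1 else 0) = 1 := by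
  by_cases h : ∃ a, P a
  · obtain ⟨a, ha⟩ := h
    rw [Finset.sum_eq_single a (fun b _ hb => if_neg fun hPb => hb (hP b a hPb ha)) (by simp),
      if_pos ha, if_neg (not_forall_not.2 ⟨a, ha⟩)]
  · push Not at h
    simp [h]

theorem Fintype.eq_of_sum_eq_one {α : Type*} [Fintype α] {f : α → ℕ} (h : ∑ a, f a = 1)
    {a b : α} (ha : f a = 1) (hb : f b = 1) : a = b := by
  classical
  by_contra hne
  have : f a + f b ≤ ∑ c, f c := by
    rw [← sum_pair hne]
    exact sum_le_sum_of_subset (subset_univ _)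
  omega

variable {n m : ℕ}

namespace PartialInjFin

def indicator (p : PartialInjFin n m) : Matrix (Fin n) (Fin m) ℕ :=
  fun i j => if (i, j) ∈ p.1 then 1 else 0

def toMatrix (p : PartialInjFin n m) : Matrix (Fin (n + m)) (Fin (m + n)) ℕ :=
  reindex finSumFinEquiv finSumFinEquiv <| fromBlocks p.indicator
    (diagonal fun i => if ∀ j, (i, j) ∉ p.1 then 1 else 0)
    (diagonal fun j => if ∀ i, (i, j) ∉ p.1 then 1 else 0) p.indicatorᵀ

variable (p : PartialInjFin n m)

@[simp]
theorem toMatrix_castAdd_castAdd (i : Fin n) (j : Fin m) :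
    p.toMatrix (Fin.castAdd m i) (Fin.castAdd n j) = if (i, j) ∈ p.1 then 1 else 0 := by
  simp [toMatrix, indicator]

@[simp]
theorem toMatrix_castAdd_natAdd (i k : Fin n) :
    p.toMatrix (Fin.castAdd m i) (Fin.natAdd m k) =
      diagonal (fun i => if ∀ j, (i, j) ∉ p.1 then 1 else 0) i k := by
  simp [toMatrix]

@[simp]
theorem toMatrix_natAdd_castAdd (l j : Fin m) :
    p.toMatrix (Fin.natAdd n l) (Fin.castAdd n j) =
      diagonal (fun j => if ∀ i, (i, j) ∉ p.1 then 1 else 0) l j := by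
  simp [toMatrix]

@[simp]
theorem toMatrix_natAdd_natAdd (l : Fin m) (k : Fin n) :
    p.toMatrix (Fin.natAdd n l) (Fin.natAdd m k) = if (k, l) ∈ p.1 then 1 else 0 := by
  simp [toMatrix, indicator]

theorem toMatrix_eq_zero_or_eq_one (i : Fin (n + m)) (j : Fin (m + n)) :
    p.toMatrix i j = 0 ∨ p.toMatrix i j = 1 := by
  induction i using Fin.addCases <;> induction j using Fin.addCases <;>
    simp only [toMatrix_castAdd_castAdd, toMatrix_castAdd_natAdd, toMatrix_natAdd_castAdd,
      toMatrix_natAdd_natAdd, diagonal_apply] <;> split_ifs <;> simp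

theorem sum_toMatrix_row (i : Fin (n + m)) : ∑ j, p.toMatrix i j = 1 := by
  induction i using Fin.addCases with
  | left i =>
    simp only [Fin.sum_univ_add, toMatrix_castAdd_castAdd, toMatrix_castAdd_natAdd,
      diagonal_apply, sum_ite_eq, mem_univ, if_true]
    convert Fintype.sum_boole_add_boole_forall_not_eq_one (fun j => (i, j) ∈ p.1)
      fun a b ha hb => p.2.1 _ ha _ hb rfl
  | right l =>
    simp only [Fin.sum_univ_add, toMatrix_natAdd_castAdd, toMatrix_natAdd_natAdd,
      diagonal_apply, sum_ite_eq, mem_univ, if_true]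
    rw [add_comm]
    convert Fintype.sum_boole_add_boole_forall_not_eq_one (fun i => (i, l) ∈ p.1)
      fun a b ha hb => p.2.2 _ ha _ hb rfl

theorem sum_toMatrix_col (j : Fin (m + n)) : ∑ i, p.toMatrix i j = 1 := by
  induction j using Fin.addCases with
  | left j =>
    simp only [Fin.sum_univ_add, toMatrix_castAdd_castAdd, toMatrix_natAdd_castAdd,
      diagonal_apply, sum_ite_eq', mem_univ, if_true]
    convert Fintype.sum_boole_add_boole_forall_not_eq_one (fun i => (i, j) ∈ p.1)
      fun a b ha hb => p.2.2 _ ha _ hb rfl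
  | right k =>
    simp only [Fin.sum_univ_add, toMatrix_castAdd_natAdd, toMatrix_natAdd_natAdd,
      diagonal_apply, sum_ite_eq', mem_univ, if_true]
    rw [add_comm]
    convert Fintype.sum_boole_add_boole_forall_not_eq_one (fun j => (k, j) ∈ p.1)
      fun a b ha hb => p.2.1 _ ha _ hb rfl

theorem toMatrix_removal (i : Fin (n + m)) (j : Fin (m + n)) (hi : (i : ℕ) < n)
    (hj : m ≤ (j : ℕ)) (h : p.toMatrix i j = 1) : (j : ℕ) = m + i := by
  induction i using Fin.addCases with
  | right l => simp at hi
  | left i =>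
    induction j using Fin.addCases with
    | left j => simp at hj; omega
    | right k =>
      obtain rfl : i = k := by
        by_contra hne
        simp [hne] at h
      simp

theorem toMatrix_insertion (i : Fin (n + m)) (j : Fin (m + n)) (hi : n ≤ (i : ℕ))
    (hj : (j : ℕ) < m) (h : p.toMatrix i j = 1) : (i : ℕ) = n + j := by
  induction j using Fin.addCases with
  | right k => simp at hj
  | left j =>
    induction i using Fin.addCases with
    | left i => simp at hi; omega
    | right l =>
      obtain rfl : l = j := by
        by_contra hne
        simp [hne] at h
      simp

def toEpsAssignMatrix : EpsAssignMatrix n m :=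
  ⟨p.toMatrix, p.toMatrix_eq_zero_or_eq_one, p.sum_toMatrix_row, p.sum_toMatrix_col,
    p.toMatrix_removal, p.toMatrix_insertion⟩

end PartialInjFin

namespace EpsAssignMatrix

variable (X : EpsAssignMatrix n m)

theorem apply_eq_ite (i : Fin (n + m)) (j : Fin (m + n)) :
    X.1 i j = if X.1 i j = 1 then 1 else 0 := by
  rcases X.2.1 i j with h | h <;> simp [h]

def toPartialInj : PartialInjFin n m :=
  ⟨univ.filter fun a => X.1 (Fin.castAdd m a.1) (Fin.castAdd n a.2) = 1, by
    refine ⟨fun a ha b hb hab => ?_, fun a ha b hb hab => ?_⟩ <;>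
      simp only [mem_filter, mem_univ, true_and] at ha hb <;> rw [← hab] at hb
    · exact Fin.castAdd_injective _ _ (Fintype.eq_of_sum_eq_one (X.2.2.1 _) ha hb)
    · exact Fin.castAdd_injective _ _ (Fintype.eq_of_sum_eq_one (X.2.2.2.1 _) ha hb)⟩

@[simp]
theorem mem_toPartialInj {a : Fin n × Fin m} :
    a ∈ X.toPartialInj.1 ↔ X.1 (Fin.castAdd m a.1) (Fin.castAdd n a.2) = 1 := by
  simp [toPartialInj]

theorem removal_apply_of_ne {i k : Fin n} (hne : k ≠ i) :
    X.1 (Fin.castAdd m i) (Fin.natAdd m k) = 0 := by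
  refine (X.2.1 _ _).resolve_right fun h => hne (Fin.ext ?_)
  simpa using X.2.2.2.2.1 _ _ (by simp) (by simp) h

theorem insertion_apply_of_ne {l j : Fin m} (hne : l ≠ j) :
    X.1 (Fin.natAdd n l) (Fin.castAdd n j) = 0 := by
  refine (X.2.1 _ _).resolve_right fun h => hne (Fin.ext ?_)
  simpa using X.2.2.2.2.2 _ _ (by simp) (by simp) h

theorem removal_apply_self (i : Fin n) :
    X.1 (Fin.castAdd m i) (Fin.natAdd m i) =
      if ∀ j, (i, j) ∉ X.toPartialInj.1 then 1 else 0 := by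
  have hrow := X.2.2.1 (Fin.castAdd m i)
  rw [Fin.sum_univ_add, Fintype.sum_eq_single i fun k hk => X.removal_apply_of_ne hk] at hrow
  have hind := Fintype.sum_boole_add_boole_forall_not_eq_one
    (fun j => (i, j) ∈ X.toPartialInj.1) fun a b ha hb => X.toPartialInj.2.1 _ ha _ hb rfl
  simp only [mem_toPartialInj] at hind ⊢
  rw [← Finset.sum_congr rfl fun j _ => X.apply_eq_ite _ _] at hind
  omega

theorem insertion_apply_self (j : Fin m) :
    X.1 (Fin.natAdd n j) (Fin.castAdd n j) =
      if ∀ i, (i, j) ∉ X.toPartialInj.1 then 1 else 0 := by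
  have hcol := X.2.2.2.1 (Fin.castAdd n j)
  rw [Fin.sum_univ_add, Fintype.sum_eq_single j fun l hl => X.insertion_apply_of_ne hl] at hcol
  have hind := Fintype.sum_boole_add_boole_forall_not_eq_one
    (fun i => (i, j) ∈ X.toPartialInj.1) fun a b ha hb => X.toPartialInj.2.2 _ ha _ hb rfl
  simp only [mem_toPartialInj] at hind ⊢
  rw [← Finset.sum_congr rfl fun i _ => X.apply_eq_ite _ _] at hind
  omega

theorem rel_of_blocks_eq {X Y : EpsAssignMatrix n m}
    (hsub : ∀ i j,
      X.1 (Fin.castAdd m i) (Fin.castAdd n j) = Y.1 (Fin.castAdd m i) (Fin.castAdd n j))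
    (hrem : ∀ i k,
      X.1 (Fin.castAdd m i) (Fin.natAdd m k) = Y.1 (Fin.castAdd m i) (Fin.natAdd m k))
    (hins : ∀ l j,
      X.1 (Fin.natAdd n l) (Fin.castAdd n j) = Y.1 (Fin.natAdd n l) (Fin.castAdd n j)) :
    epsAssignSetoid n m X Y := by
  intro i j hij
  induction i using Fin.addCases <;> induction j using Fin.addCases
  · exact hsub _ _
  · exact hrem _ _
  · exact hins _ _
  · simp at hij

theorem toPartialInj_eq_of_rel {X Y : EpsAssignMatrix n m} (h : epsAssignSetoid n m X Y) :
    X.toPartialInj = Y.toPartialInj :=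
  Subtype.ext <| Finset.ext fun a => by
    rw [mem_toPartialInj, mem_toPartialInj, h _ _ (Or.inl (by simp))]

theorem toPartialInj_toEpsAssignMatrix (p : PartialInjFin n m) :
    p.toEpsAssignMatrix.toPartialInj = p :=
  Subtype.ext <| Finset.ext fun a => by
    rw [mem_toPartialInj]
    by_cases ha : a ∈ p.1 <;> simp [PartialInjFin.toEpsAssignMatrix, ha]

theorem toEpsAssignMatrix_toPartialInj_rel :
    epsAssignSetoid n m X.toPartialInj.toEpsAssignMatrix X := by
  apply rel_of_blocks_eq
  · intro i j
    simp [PartialInjFin.toEpsAssignMatrix, ← X.apply_eq_ite]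
  · intro i k
    rcases eq_or_ne k i with rfl | hne
    · simp [PartialInjFin.toEpsAssignMatrix, X.removal_apply_self]
    · simp [PartialInjFin.toEpsAssignMatrix, X.removal_apply_of_ne hne,
        diagonal_apply_ne _ hne.symm]
  · intro l j
    rcases eq_or_ne l j with rfl | hne
    · simp [PartialInjFin.toEpsAssignMatrix, X.insertion_apply_self]
    · simp [PartialInjFin.toEpsAssignMatrix, X.insertion_apply_of_ne hne,
        diagonal_apply_ne _ hne]

end EpsAssignMatrix

/-- there is a bijection between the set of `ε`-assignment
matrices up to equivalence (ignoring the auxiliary block `X^ε`) and the set of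
injective partial functions from `{1,…,n}` to `{1,…,m}`. -/
theorem epsAssign_quotient_equiv_partialInj (n m : ℕ) :
    Nonempty (Quotient (epsAssignSetoid n m) ≃ PartialInjFin n m) :=
  ⟨{ toFun := Quotient.lift EpsAssignMatrix.toPartialInj
        fun _ _ => EpsAssignMatrix.toPartialInj_eq_of_rel
     invFun := fun p => Quotient.mk _ p.toEpsAssignMatrix
     left_inv := Quotient.ind fun X => Quotient.sound X.toEpsAssignMatrix_toPartialInj_rel
     right_inv := EpsAssignMatrix.toPartialInj_toEpsAssignMatrix }⟩
end
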